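/- Let H_XXX := σx ⊗ σx + σy ⊗ σy + σz ⊗ σz be the two-qubit isotropic Heisenberg interaction Hamiltonian, a 4×4 complex matrix. Then there is no invertible 4×4 complex matrix P with P * H_XXX * P⁻¹ = -H_XXX; in particular H_XXX is not sign-invertible by any unitary, let alone by local unitaries. (Its eigenvalues are 1, 1, 1, -3, which do not occur in pairs of opposite sign.) -/

import Mathlib

open Matrix Kronecker

noncomputable def pauliX : Matrix (Fin 2) (Fin 2) ℂ := !![0, 1; 1, 0]
noncomputable def pauliY : Matrix (Fin 2) (Fin 2) ℂ := !![0, -Complex.I; Complex.I, 0]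
noncomputable def pauliZ : Matrix (Fin 2) (Fin 2) ℂ := !![1, 0; 0, -1]

noncomputable def H_XXX : Matrix (Fin 2 × Fin 2) (Fin 2 × Fin 2) ℂ :=
  pauliX ⊗ₖ pauliX + pauliY ⊗ₖ pauliY + pauliZ ⊗ₖ pauliZ

/-! A matrix conjugate to its negative has traceless odd powers; but the spectrum `{1, 1, 1, -3}`
of `H_XXX` gives `trace (H_XXX ^ 3) = 3 - 27 = -24`. -/

theorem Matrix.trace_pow_eq_zero_of_conj_eq_neg {n R : Type*} [Fintype n] [DecidableEq n]
    [CommRing R] [IsAddTorsionFree R] {P A : Matrix n n R} (hP : IsUnit P)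
    (hA : P * A * P⁻¹ = -A) {k : ℕ} (hk : Odd k) : trace (A ^ k) = 0 := by
  have hconj : P * A ^ k * P⁻¹ = -A ^ k := by
    rw [← hP.unit_spec, ← coe_units_inv, ← Units.conj_pow, coe_units_inv, hP.unit_spec, hA,
      hk.neg_pow]
  rw [← self_eq_neg, ← trace_neg, ← hconj, trace_conj hP]

theorem trace_H_XXX_pow_three : trace (H_XXX ^ 3) = -24 := by
  simp [pow_three, H_XXX, pauliX, pauliY, pauliZ, trace, mul_apply, Fintype.sum_prod_type,
    Fin.sum_univ_two]
  ring

theorem stmt7 :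
    ¬ ∃ P : Matrix (Fin 2 × Fin 2) (Fin 2 × Fin 2) ℂ,
      IsUnit P ∧ P * H_XXX * P⁻¹ = -H_XXX := by
  rintro ⟨P, hP, hconj⟩
  have := trace_pow_eq_zero_of_conj_eq_neg hP hconj (k := 3) (by decide)
  norm_num [trace_H_XXX_pow_three] at this
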